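/- For every n ≥ 0 the polynomial identity Z_{2n+1}(x²) = (L_{2n+1}(x))² holds in ℤ[x], and for every n ≥ 1 the polynomial identity Z_{2n}(x²) = 4 − (L_{2n}(x))² holds in ℤ[x]. -/
import Mathlib

open Polynomial

noncomputable def lucasPoly : ℕ → Polynomial ℤ
  | 0 => 2
  | 1 => X
  | n + 2 => X * lucasPoly (n + 1) - lucasPoly n

noncomputable def zpread (n : ℕ) : Polynomial ℤ := 2 - (lucasPoly n).comp (2 - X)

lemma luc_rec (n : ℕ) : lucasPoly (n + 2) = X * lucasPoly (n + 1) - lucasPoly n := rfl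

lemma luc_add4 (n : ℕ) :
    lucasPoly (n + 4) = (X ^ 2 - 2) * lucasPoly (n + 2) - lucasPoly n := by
  have h1 := luc_rec (n + 2)
  have h2 := luc_rec (n + 1)
  have h3 := luc_rec n
  rw [show n + 2 + 2 = n + 4 from rfl] at h1
  rw [show n + 1 + 2 = n + 3 from rfl] at h2
  rw [h1, h2, h3]; ring

lemma luc_neg (n : ℕ) : (lucasPoly n).comp (-X) = (-1 : Polynomial ℤ) ^ n * lucasPoly n := by
  have key : ∀ n : ℕ, (lucasPoly n).comp (-X) = (-1 : Polynomial ℤ) ^ n * lucasPoly n ∧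
      (lucasPoly (n+1)).comp (-X) = (-1 : Polynomial ℤ) ^ (n+1) * lucasPoly (n+1) := by
    intro n
    induction n with
    | zero => simp [lucasPoly]
    | succ k ih =>
      refine ⟨ih.2, ?_⟩
      rw [luc_rec, sub_comp, mul_comp, X_comp, ih.1, ih.2]
      ring
  exact (key n).1

lemma luc_comp (n : ℕ) : (lucasPoly n).comp (X ^ 2 - 2) = lucasPoly (2 * n) := by
  have key : ∀ n : ℕ, (lucasPoly n).comp (X ^ 2 - 2) = lucasPoly (2 * n) ∧
      (lucasPoly (n+1)).comp (X ^ 2 - 2) = lucasPoly (2 * (n+1)) := by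
    intro n
    induction n with
    | zero =>
      constructor
      · simp [lucasPoly]
      · show (X : Polynomial ℤ).comp (X^2-2) = lucasPoly 2
        rw [luc_rec 0, show lucasPoly 1 = X from rfl, show lucasPoly 0 = 2 from rfl]
        simp; ring
    | succ k ih =>
      refine ⟨ih.2, ?_⟩
      rw [luc_rec, sub_comp, mul_comp, X_comp, ih.1, ih.2]
      rw [show 2 * (k + 1 + 1) = 2 * k + 4 from by ring, luc_add4,
        show 2 * (k + 1) = 2 * k + 2 from by ring]
  exact (key n).1

lemma luc_sq (n : ℕ) : lucasPoly n ^ 2 = lucasPoly (2 * n) + 2 := by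
  have key : ∀ n : ℕ,
      (lucasPoly n ^ 2 = lucasPoly (2 * n) + 2 ∧
       lucasPoly (n+1) * lucasPoly n = lucasPoly (2 * n + 1) + X) ∧
      (lucasPoly (n+1) ^ 2 = lucasPoly (2 * (n+1)) + 2 ∧
       lucasPoly (n+2) * lucasPoly (n+1) = lucasPoly (2 * (n+1) + 1) + X) := by
    intro n
    induction n with
    | zero =>
      refine ⟨⟨?_, ?_⟩, ?_, ?_⟩
      · norm_num [lucasPoly]
      · show lucasPoly 1 * lucasPoly 0 = lucasPoly 1 + X
        rw [show lucasPoly 1 = X from rfl, show lucasPoly 0 = 2 from rfl]; ring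
      · show lucasPoly 1 ^ 2 = lucasPoly 2 + 2
        rw [luc_rec 0, show lucasPoly 1 = X from rfl, show lucasPoly 0 = 2 from rfl]; ring
      · show lucasPoly 2 * lucasPoly 1 = lucasPoly 3 + X
        rw [show (3:ℕ) = 1 + 2 from rfl, luc_rec 1, luc_rec 0,
          show lucasPoly 1 = X from rfl, show lucasPoly 0 = 2 from rfl]; ring
    | succ k ih =>
      obtain ⟨⟨a0, b0⟩, a1, b1⟩ := ih
      have a2 : lucasPoly (k+2) ^ 2 = lucasPoly (2*(k+1+1)) + 2 := by
        have h : lucasPoly (k+2) ^ 2 =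
            X^2 * lucasPoly (k+1)^2 - 2*X*(lucasPoly (k+1)*lucasPoly k) + lucasPoly k ^2 := by
          rw [luc_rec]; ring
        rw [h, a1, b0, a0, show 2*(k+1+1) = 2*k+4 from by ring, luc_add4,
          show 2*(k+1) = 2*k+2 from by ring, luc_rec (2*k)]
        ring
      refine ⟨⟨a1, b1⟩, a2, ?_⟩
      have h : lucasPoly (k+3) * lucasPoly (k+2) =
          X * lucasPoly (k+2)^2 - lucasPoly (k+2) * lucasPoly (k+1) := by
        rw [show k+3 = (k+1)+2 from rfl, luc_rec]; ring
      rw [h, a2, b1, show 2*(k+1+1)+1 = (2*(k+1)+1)+2 from by ring,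
        luc_rec (2*(k+1)+1), show 2*(k+1+1) = 2*(k+1)+1+1 from by ring]
      ring
  exact (key n).1.1

lemma comp_two_sub (n : ℕ) :
    ((lucasPoly n).comp (2 - X)).comp (X ^ 2) =
      (-1 : Polynomial ℤ) ^ n * lucasPoly (2 * n) := by
  rw [comp_assoc]
  have h : (2 - X : Polynomial ℤ).comp (X ^ 2) = (-X : Polynomial ℤ).comp (X ^ 2 - 2) := by
    simp
  rw [h, ← comp_assoc, luc_neg, mul_comp, luc_comp]
  simp

/-- `Z (2n+1) (x²) = (L (2n+1) x)²` for `n ≥ 0`, and `Z (2n) (x²) = 4 - (L (2n) x)²`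
for `n ≥ 1`, as identities in `ℤ[X]`. -/
theorem zpread_sq_eq_lucas_sq :
    (∀ n : ℕ, (zpread (2 * n + 1)).comp (X ^ 2) = (lucasPoly (2 * n + 1)) ^ 2) ∧
    (∀ n : ℕ, 1 ≤ n → (zpread (2 * n)).comp (X ^ 2) = 4 - (lucasPoly (2 * n)) ^ 2) := by
  constructor
  · intro n
    rw [zpread, sub_comp, comp_two_sub, luc_sq (2*n+1)]
    simp [pow_succ, pow_mul]
    ring
  · intro n _
    rw [zpread, sub_comp, comp_two_sub, pow_mul]
    rw [luc_sq (2*n)]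
    simp
    ring
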